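/- arXiv:2506.04657 — 2 statements merged into one kernel-verified Lean document; each statement's English description precedes it below -/
import Mathlib

section
/- Let k ≥ 2. A position S = (x_1, ..., x_n) is a P-position in misère k-Bounded Greedy Nim if and only if one of the following holds: (i) x_3 ≤ 1, β(S) is even, and (x_1, x_2) is k-nice; (ii) x_3 ≤ 1, β(S) is odd, and R(x_1 − x_2) = 0; (iii) x_3 ≥ 2, β(S) is even, and R(x_1 − x_2) = 0; (iv) x_3 ≥ 2, β(S) is odd, and (x_1, x_2, x_3) is k-good. -/
/-- One move in `k`-bounded greedy Nim on a descending-sorted list of heaps: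
remove `t` stones with `1 ≤ t ≤ min x₁ k` from a heap with the largest
number of stones `x₁` (the head), and re-sort the result in descending order. -/
def BFollower (k : ℕ) (S S' : List ℕ) : Prop :=
  ∃ t : ℕ, 1 ≤ t ∧ t ≤ min S.headI k ∧
    S' = List.orderedInsert (· ≥ ·) (S.headI - t) S.tail

/-- One move in greedy Nim: remove any `t` stones with `1 ≤ t ≤ x₁` from a heap
with the largest number of stones `x₁`, and re-sort in descending order. -/
def GFollower (S S' : List ℕ) : Prop :=
  ∃ t : ℕ, 1 ≤ t ∧ t ≤ S.headI ∧
    S' = List.orderedInsert (· ≥ ·) (S.headI - t) S.tail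

theorem BFollower.sum_lt {k : ℕ} {S S' : List ℕ} (h : BFollower k S S') :
    S'.sum < S.sum := by
  obtain ⟨t, ht1, ht2, rfl⟩ := h
  have htx : t ≤ S.headI := le_trans ht2 (min_le_left _ _)
  match S with
  | [] => simp [List.headI] at htx; omega
  | a :: l =>
      have hperm := List.perm_orderedInsert (· ≥ ·) (a - t) l
      have hsum : (List.orderedInsert (· ≥ ·) (a - t) l).sum = (a - t) + l.sum :=
        hperm.sum_eq
      simp only [List.headI, List.tail] at *
      simp [hsum]
      omega

theorem GFollower.sum_lt {S S' : List ℕ} (h : GFollower S S') :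
    S'.sum < S.sum := by
  obtain ⟨t, ht1, ht2, rfl⟩ := h
  match S with
  | [] => simp [List.headI] at ht2; omega
  | a :: l =>
      have hperm := List.perm_orderedInsert (· ≥ ·) (a - t) l
      have hsum : (List.orderedInsert (· ≥ ·) (a - t) l).sum = (a - t) + l.sum :=
        hperm.sum_eq
      simp only [List.headI, List.tail] at *
      simp [hsum]
      omega

/-- `S` is a P-position of `k`-bounded greedy Nim under the normal play
convention: the all-zero position is a P-position (it has no followers), and a
position is a P-position iff every follower is an N-position. -/
def NormalBP (k : ℕ) (S : List ℕ) : Prop :=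
  ∀ S', BFollower k S S' → ¬ NormalBP k S'
termination_by S.sum
decreasing_by exact BFollower.sum_lt (by assumption)

/-- `S` is a P-position of `k`-bounded greedy Nim under the misère play
convention: the all-zero position is an N-position, and any other position is a
P-position iff every follower is an N-position. -/
def MisereBP (k : ℕ) (S : List ℕ) : Prop :=
  S.sum ≠ 0 ∧ ∀ S', BFollower k S S' → ¬ MisereBP k S'
termination_by S.sum
decreasing_by exact BFollower.sum_lt (by assumption)

/-- Normal-play P-positions of greedy Nim. -/
def NormalGP (S : List ℕ) : Prop :=
  ∀ S', GFollower S S' → ¬ NormalGP S'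
termination_by S.sum
decreasing_by exact GFollower.sum_lt (by assumption)

/-- Misère-play P-positions of greedy Nim. -/
def MisereGP (S : List ℕ) : Prop :=
  S.sum ≠ 0 ∧ ∀ S', GFollower S S' → ¬ MisereGP S'
termination_by S.sum
decreasing_by exact GFollower.sum_lt (by assumption)

/-- `R a` is the remainder of `a` modulo `k + 1`. -/
def R (k a : ℕ) : ℕ := a % (k + 1)

/-- The `j`-th heap (1-based) of the position `S`. -/
def heap (S : List ℕ) (j : ℕ) : ℕ := S.getD (j - 1) 0

/-- `β(S)`: `0` if `x₃ = 0`, and `max { j : x_j = x₃ } - 2` otherwise. -/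
noncomputable def beta (S : List ℕ) : ℕ :=
  if heap S 3 = 0 then 0
  else sSup {j : ℕ | 1 ≤ j ∧ j ≤ S.length ∧ heap S j = heap S 3} - 2

/-- `α(S)`: `0` if `x₁ = 0`, and `max { j : x_j = x₁ }` otherwise. -/
noncomputable def alpha (S : List ℕ) : ℕ :=
  if heap S 1 = 0 then 0
  else sSup {j : ℕ | 1 ≤ j ∧ j ≤ S.length ∧ heap S j = heap S 1}

/-- The pair `(x₁, x₂)` (with `x₁ ≥ x₂`) is `k`-nice. -/
def KNice (k x₁ x₂ : ℕ) : Prop :=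
  (R k x₁ = 0 ∧ R k x₂ = 1) ∨
  (R k (x₁ - x₂) = 0 ∧ 2 ≤ R k x₂) ∨
  (R k x₁ = 1 ∧ R k x₂ = 0)

/-- The triple `(x₁, x₂, x₃)` (with `x₁ ≥ x₂ ≥ x₃`) is `k`-good. -/
def KGood (k x₁ x₂ x₃ : ℕ) : Prop :=
  (R k (x₁ - x₂) = k ∧ R k (x₂ - x₃) = 0) ∨
  (R k (x₁ - x₂) = 0 ∧ 1 ≤ R k (x₂ - x₃) ∧ R k (x₂ - x₃) ≤ k - 1) ∨
  (R k (x₁ - x₂) = 1 ∧ R k (x₂ - x₃) = k)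


/-- The condition of the main theorem characterizing misère P-positions of
`k`-bounded greedy Nim. -/
noncomputable def MiserePCond (k : ℕ) (S : List ℕ) : Prop :=
  (heap S 3 ≤ 1 ∧ Even (beta S) ∧ KNice k (heap S 1) (heap S 2)) ∨
  (heap S 3 ≤ 1 ∧ Odd (beta S) ∧ R k (heap S 1 - heap S 2) = 0) ∨
  (2 ≤ heap S 3 ∧ Even (beta S) ∧ R k (heap S 1 - heap S 2) = 0) ∨
  (2 ≤ heap S 3 ∧ Odd (beta S) ∧ KGood k (heap S 1) (heap S 2) (heap S 3))


/-!
The usual strategy argument identifies the misère P-positions with the positions satisfying the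
condition of the theorem, once one knows that the condition fails at the all-zero position, that
no move leads from a position satisfying it to another one, and that every other nonzero position
has a move into it. A move only shrinks the largest heap, so the condition before and after the
move is determined by the top heaps `x₁ ≥ x₂ ≥ x₃ ≥ x₄` and the number `c` of heaps of size at
least `x₄`, which fixes `β`. What remains is a case analysis on the remainders modulo `k + 1`,
according to where the reduced heap is re-inserted into the descending order.
-/

section Remainder

variable {k a b t : ℕ}

lemma R_lt (k a : ℕ) : R k a < k + 1 := Nat.mod_lt _ k.succ_pos

lemma R_le (k a : ℕ) : R k a ≤ a := Nat.mod_le a (k + 1)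

lemma R_of_lt (h : a < k + 1) : R k a = a := Nat.mod_eq_of_lt h

lemma R_R (k a : ℕ) : R k (R k a) = R k a := R_of_lt (R_lt k a)

lemma R_sub (h : b ≤ a) :
    (R k b ≤ R k a ∧ R k (a - b) = R k a - R k b) ∨
    (R k a < R k b ∧ R k (a - b) = R k a + (k + 1) - R k b) := by
  have hsum : R k a = (R k b + R k (a - b)) % (k + 1) := by
    unfold R; rw [← Nat.add_mod, Nat.add_sub_cancel' h]
  have := R_lt k b
  have := R_lt k (a - b)
  rcases lt_or_ge (R k b + R k (a - b)) (k + 1) with hlt | hge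
  · rw [Nat.mod_eq_of_lt hlt] at hsum; omega
  · rw [Nat.mod_eq_sub_mod hge, Nat.mod_eq_of_lt (by omega)] at hsum; omega

lemma R_sub_of_le (h : b ≤ a) (hb : b ≤ k) :
    (b ≤ R k a ∧ R k (a - b) = R k a - b) ∨
    (R k a < b ∧ R k (a - b) = R k a + (k + 1) - b) := by
  simpa only [R_of_lt (Nat.lt_succ_of_le hb)] using R_sub (k := k) h

lemma R_sub_R (k a : ℕ) : R k (a - R k a) = 0 := by
  have := R_sub (k := k) (R_le k a); rw [R_R] at this; omega

lemma R_sub_sub_of_le (h : t ≤ a - b) (htk : t ≤ k) :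
    (t ≤ R k (a - b) ∧ R k (a - t - b) = R k (a - b) - t) ∨
    (R k (a - b) < t ∧ R k (a - t - b) = R k (a - b) + (k + 1) - t) := by
  rw [Nat.sub_right_comm]; exact R_sub_of_le h htk

end Remainder

/-- The condition of the theorem for a position with top heaps `y₁ ≥ y₂ ≥ y₃` and `β = b`. -/
def PCond (k y₁ y₂ y₃ b : ℕ) : Prop :=
  (y₃ ≤ 1 ∧ Even b ∧ KNice k y₁ y₂) ∨
  (y₃ ≤ 1 ∧ Odd b ∧ R k (y₁ - y₂) = 0) ∨
  (2 ≤ y₃ ∧ Even b ∧ R k (y₁ - y₂) = 0) ∨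
  (2 ≤ y₃ ∧ Odd b ∧ KGood k y₁ y₂ y₃)

/-- `β` of a descending position whose third and fourth heaps are `x₃ ≥ x₄` and which has
exactly `c` heaps of size at least `x₄`. -/
def betaOf (x₃ x₄ c : ℕ) : ℕ := if x₃ = 0 then 0 else if x₄ < x₃ then 1 else c - 2

/-- `PCond` of the position reached from a descending position `x₁ ≥ x₂ ≥ x₃ ≥ x₄ ≥ ⋯` with
`c` heaps of size at least `x₄` by reducing `x₁` to `v`: the four cases are the places where
`v` is re-inserted. -/
def PCondAfterMove (k x₂ x₃ x₄ c v : ℕ) : Prop :=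
  if x₂ ≤ v then PCond k v x₂ x₃ (betaOf x₃ x₄ c)
  else if x₃ ≤ v then PCond k x₂ v x₃ (betaOf x₃ x₄ c)
  else if x₄ ≤ v then PCond k x₂ x₃ v (betaOf v x₄ c)
  else PCond k x₂ x₃ x₄ (c - 3)

section ReducedGame

variable {k x₁ x₂ x₃ x₄ c t v : ℕ}

lemma betaOf_cases (x₃ x₄ c : ℕ) :
    (x₃ = 0 ∧ betaOf x₃ x₄ c = 0) ∨ (1 ≤ x₃ ∧ x₄ < x₃ ∧ betaOf x₃ x₄ c = 1) ∨
    (1 ≤ x₃ ∧ x₃ ≤ x₄ ∧ betaOf x₃ x₄ c = c - 2) := by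
  unfold betaOf; split_ifs <;> omega

namespace PCondAfterMove

lemma of_first (h : x₂ ≤ v) (hC : PCond k v x₂ x₃ (betaOf x₃ x₄ c)) :
    PCondAfterMove k x₂ x₃ x₄ c v := by
  rwa [PCondAfterMove, if_pos h]

lemma of_second (h₂ : v < x₂) (h₃ : x₃ ≤ v) (hC : PCond k x₂ v x₃ (betaOf x₃ x₄ c)) :
    PCondAfterMove k x₂ x₃ x₄ c v := by
  rwa [PCondAfterMove, if_neg h₂.not_ge, if_pos h₃]

lemma of_third (h₂ : v < x₂) (h₃ : v < x₃) (h₄ : x₄ ≤ v)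
    (hC : PCond k x₂ x₃ v (betaOf v x₄ c)) : PCondAfterMove k x₂ x₃ x₄ c v := by
  rwa [PCondAfterMove, if_neg h₂.not_ge, if_neg h₃.not_ge, if_pos h₄]

lemma of_fourth (h₂ : v < x₂) (h₃ : v < x₃) (h₄ : v < x₄) (hC : PCond k x₂ x₃ x₄ (c - 3)) :
    PCondAfterMove k x₂ x₃ x₄ c v := by
  rwa [PCondAfterMove, if_neg h₂.not_ge, if_neg h₃.not_ge, if_neg h₄.not_ge]

end PCondAfterMove

lemma one_le_of_pCond (h₁₂ : x₂ ≤ x₁) (h₂₃ : x₃ ≤ x₂)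
    (hC : PCond k x₁ x₂ x₃ (betaOf x₃ x₄ c)) : 1 ≤ x₁ := by
  by_contra h
  obtain rfl : x₁ = 0 := by omega
  obtain rfl : x₂ = 0 := by omega
  obtain rfl : x₃ = 0 := by omega
  simp [PCond, KNice, R, betaOf] at hC

theorem not_pCondAfterMove_of_pCond (h₁₂ : x₂ ≤ x₁) (h₂₃ : x₃ ≤ x₂) (h₃₄ : x₄ ≤ x₃)
    (hc : 3 ≤ c) (hC : PCond k x₁ x₂ x₃ (betaOf x₃ x₄ c))
    (ht : 1 ≤ t) (htx : t ≤ x₁) (htk : t ≤ k) : ¬ PCondAfterMove k x₂ x₃ x₄ c (x₁ - t) := by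
  intro hF
  have := betaOf_cases x₃ x₄ c
  have := R_sub (k := k) h₁₂
  have := R_sub (k := k) h₂₃
  have := R_lt k x₁; have := R_lt k x₂; have := R_lt k x₃
  have := R_lt k (x₁ - x₂); have := R_lt k (x₂ - x₃); have := R_le k (x₁ - x₂)
  have := R_sub_of_le (k := k) htx htk
  have small : ∀ {a}, a < k + 1 → R k a = a := R_of_lt
  unfold PCondAfterMove at hF
  split_ifs at hF with h₁ h₂ h₃
  · simp only [PCond, KNice, KGood, Nat.even_iff, Nat.odd_iff] at hC hF
    have := R_sub_sub_of_le (show t ≤ x₁ - x₂ by omega) htk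
    omega
  · simp only [PCond, KNice, KGood, Nat.even_iff, Nat.odd_iff] at hC hF
    rw [show x₁ - t - x₃ = x₂ - x₃ - (x₂ - (x₁ - t)) by omega] at hF
    have := R_sub_of_le (k := k) (show x₂ - (x₁ - t) ≤ x₂ - x₃ by omega) (by omega)
    have := R_sub_of_le (k := k) (show x₂ - (x₁ - t) ≤ x₂ by omega) (by omega)
    rw [show x₂ - (x₂ - (x₁ - t)) = x₁ - t by omega] at this
    have := small (show x₁ - x₂ < k + 1 by omega)
    have := small (show x₂ - (x₁ - t) < k + 1 by omega)
    omega
  · have := betaOf_cases (x₁ - t) x₄ c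
    have := small (show x₃ - (x₁ - t) < k + 1 by omega)
    have := small (show x₁ - x₂ < k + 1 by omega)
    have := small (show x₂ - x₃ < k + 1 by omega)
    have := @small x₁; have := @small x₂; have := @small x₃
    simp only [PCond, KNice, KGood, Nat.even_iff, Nat.odd_iff] at hC hF
    omega
  · have := small (show x₃ - x₄ < k + 1 by omega)
    have := small (show x₁ - x₂ < k + 1 by omega)
    have := small (show x₂ - x₃ < k + 1 by omega)
    have := @small x₁; have := @small x₂; have := @small x₃
    simp only [PCond, KNice, KGood, Nat.even_iff, Nat.odd_iff] at hC hF
    omega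

end ReducedGame

section Moves

variable {k a x₁ x₂ x₃ x₄ c : ℕ}

lemma exists_R_sub_eq_zero (h : R k a ≠ 0) : ∃ t, 1 ≤ t ∧ t ≤ min a k ∧ R k (a - t) = 0 := by
  have := R_le k a
  have := R_lt k a
  exact ⟨R k a, by omega, by omega, R_sub_R k a⟩

lemma exists_R_sub_eq_one (hk : 1 ≤ k) (ha : 1 ≤ a) (h : R k a ≠ 1) :
    ∃ t, 1 ≤ t ∧ t ≤ min a k ∧ R k (a - t) = 1 := by
  have := R_le k a
  have := R_lt k a
  by_cases h0 : R k a = 0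
  · have : k + 1 ≤ a := by
      by_contra hlt; rw [R_of_lt (by omega)] at h0; omega
    refine ⟨k, hk, by omega, ?_⟩
    have := R_sub_of_le (k := k) (show k ≤ a by omega) le_rfl
    omega
  · refine ⟨R k a - 1, by omega, by omega, ?_⟩
    have := R_sub_of_le (k := k) (show R k a - 1 ≤ a by omega) (by omega)
    omega

lemma exists_move_R_sub_eq_zero (h₁₂ : x₂ ≤ x₁) (hA : R k (x₁ - x₂) ≠ 0) :
    ∃ t, 1 ≤ t ∧ t ≤ min x₁ k ∧ x₂ ≤ x₁ - t ∧ R k (x₁ - t - x₂) = 0 := by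
  obtain ⟨t, ht, htm, hv⟩ := exists_R_sub_eq_zero hA
  exact ⟨t, ht, by omega, by omega, by rwa [Nat.sub_right_comm]⟩

lemma exists_move_of_not_kNice (hk : 2 ≤ k) (h₁₂ : x₂ ≤ x₁) (h₂₃ : x₃ ≤ x₂) (h₃₄ : x₄ ≤ x₃)
    (hc : 3 ≤ c) (hx₁ : 1 ≤ x₁) (hx₃ : x₃ ≤ 1) (hb : Even (betaOf x₃ x₄ c))
    (hN : ¬ KNice k x₁ x₂) :
    ∃ t, 1 ≤ t ∧ t ≤ min x₁ k ∧ PCondAfterMove k x₂ x₃ x₄ c (x₁ - t) := by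
  have := betaOf_cases x₃ x₄ c
  rw [Nat.even_iff] at hb
  unfold KNice at hN
  rcases lt_trichotomy (R k x₂) 1 with hx₂ | hx₂ | hx₂
  · obtain ⟨t, ht, htm, hv⟩ := exists_R_sub_eq_one (k := k) (by omega) hx₁ (by omega)
    refine ⟨t, ht, htm, ?_⟩
    have : x₃ ≤ x₁ - t := by
      by_contra hlt; rw [R_of_lt (show x₁ - t < k + 1 by omega)] at hv; omega
    by_cases h₁ : x₂ ≤ x₁ - t
    · exact .of_first h₁ (Or.inl ⟨hx₃, Nat.even_iff.2 hb, .inr (.inr ⟨hv, by omega⟩)⟩)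
    · exact .of_second (by omega) this (Or.inl ⟨hx₃, Nat.even_iff.2 hb, .inl ⟨by omega, hv⟩⟩)
  · obtain ⟨t, ht, htm, hv⟩ := exists_R_sub_eq_zero (k := k) (a := x₁) (by omega)
    refine ⟨t, ht, htm, ?_⟩
    by_cases h₁ : x₂ ≤ x₁ - t
    · exact .of_first h₁ (Or.inl ⟨hx₃, Nat.even_iff.2 hb, .inl ⟨hv, hx₂⟩⟩)
    by_cases h₂ : x₃ ≤ x₁ - t
    · exact .of_second (by omega) h₂ (Or.inl ⟨hx₃, Nat.even_iff.2 hb, .inr (.inr ⟨hx₂, hv⟩)⟩)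
    -- `x₃ = 1` with even `β` forces `x₄ = 1`, so the reduced heap drops below `x₄`
    have h₂₃' : R k (x₂ - x₃) = 0 := by
      have := R_sub (k := k) h₂₃; rw [R_of_lt (show x₃ < k + 1 by omega)] at this; omega
    exact .of_fourth (by omega) (by omega) (by omega)
      (Or.inr (Or.inl ⟨by omega, Nat.odd_iff.2 (by omega), h₂₃'⟩))
  · obtain ⟨t, ht, htm, h₁, hv⟩ := exists_move_R_sub_eq_zero (k := k) h₁₂ (by omega)
    exact ⟨t, ht, htm, .of_first h₁ (Or.inl ⟨hx₃, Nat.even_iff.2 hb, .inr (.inl ⟨hv, hx₂⟩)⟩)⟩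

lemma exists_move_of_not_kGood_of_R_sub_eq_zero (hk : 2 ≤ k) (h₁₂ : x₂ ≤ x₁) (h₂₃ : x₃ ≤ x₂)
    (h₃₄ : x₄ ≤ x₃) (hx₃ : 2 ≤ x₃) (hb : Odd (betaOf x₃ x₄ c)) (hB : R k (x₂ - x₃) = 0)
    (hA : R k (x₁ - x₂) ≠ k) :
    ∃ t, 1 ≤ t ∧ t ≤ min x₁ k ∧ PCondAfterMove k x₂ x₃ x₄ c (x₁ - t) := by
  have := betaOf_cases x₃ x₄ c
  rw [Nat.odd_iff] at hb
  have := R_le k (x₁ - x₂)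
  have := R_lt k (x₁ - x₂)
  set t := R k (x₁ - x₂) + 1
  refine ⟨t, by omega, by omega, ?_⟩
  by_cases h₁ : x₂ ≤ x₁ - t
  · have := R_sub_sub_of_le (k := k) (show t ≤ x₁ - x₂ by omega) (by omega)
    exact .of_first h₁ (Or.inr (Or.inr (Or.inr ⟨hx₃, Nat.odd_iff.2 hb, .inl ⟨by omega, hB⟩⟩)))
  have hv : x₁ - t = x₂ - 1 := by omega
  have hR₁ : R k 1 = 1 := R_of_lt (by omega)
  by_cases h₂ : x₃ ≤ x₁ - t
  · have := R_sub_of_le (k := k) (show 1 ≤ x₂ - x₃ by omega) (by omega)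
    rw [hv]
    refine .of_second (by omega) (by omega) (Or.inr (Or.inr (Or.inr
      ⟨hx₃, Nat.odd_iff.2 hb, .inr (.inr ⟨?_, ?_⟩)⟩)))
    · rwa [show x₂ - (x₂ - 1) = 1 by omega]
    · rw [show x₂ - 1 - x₃ = x₂ - x₃ - 1 by omega]; omega
  obtain rfl : x₃ = x₂ := by omega
  by_cases h₃ : x₄ ≤ x₁ - t
  · have hR₂ : x₃ = 2 → R k x₃ = 2 := fun h => h ▸ R_of_lt (by omega)
    rw [hv] at h₃ ⊢
    have := betaOf_cases (x₃ - 1) x₄ c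
    refine .of_third (by omega) (by omega) (by omega) ?_
    simp only [PCond, KNice, KGood, Nat.even_iff, Nat.odd_iff, Nat.sub_self, hR₁,
      show x₃ - (x₃ - 1) = 1 by omega, R_of_lt (show 0 < k + 1 by omega), true_and, and_true]
    omega
  · obtain rfl : x₄ = x₃ := by omega
    exact .of_fourth (by omega) (by omega) (by omega)
      (Or.inr (Or.inr (Or.inl ⟨hx₃, Nat.even_iff.2 (by omega), by simp [R]⟩)))

lemma exists_move_of_not_kGood (hk : 2 ≤ k) (h₁₂ : x₂ ≤ x₁) (h₂₃ : x₃ ≤ x₂) (h₃₄ : x₄ ≤ x₃)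
    (hx₃ : 2 ≤ x₃) (hb : Odd (betaOf x₃ x₄ c)) (hN : ¬ KGood k x₁ x₂ x₃) :
    ∃ t, 1 ≤ t ∧ t ≤ min x₁ k ∧ PCondAfterMove k x₂ x₃ x₄ c (x₁ - t) := by
  unfold KGood at hN
  have := R_lt k (x₂ - x₃)
  rcases Nat.lt_or_ge (R k (x₂ - x₃)) k with hB | hB
  · by_cases hB0 : R k (x₂ - x₃) = 0
    · exact exists_move_of_not_kGood_of_R_sub_eq_zero hk h₁₂ h₂₃ h₃₄ hx₃ hb hB0 (by omega)
    obtain ⟨t, ht, htm, h₁, hv⟩ := exists_move_R_sub_eq_zero (k := k) h₁₂ (by omega)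
    exact ⟨t, ht, htm, .of_first h₁
      (Or.inr (Or.inr (Or.inr ⟨hx₃, hb, .inr (.inl ⟨hv, by omega, by omega⟩)⟩)))⟩
  by_cases h₁₂' : x₂ < x₁
  · obtain ⟨t, ht, htm, hv⟩ := exists_R_sub_eq_one (k := k) (a := x₁ - x₂) (by omega)
      (by omega) (by omega)
    rw [Nat.sub_right_comm] at hv
    exact ⟨t, ht, by omega, .of_first (by omega)
      (Or.inr (Or.inr (Or.inr ⟨hx₃, hb, .inr (.inr ⟨hv, by omega⟩)⟩)))⟩
  obtain rfl : x₂ = x₁ := by omega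
  have hk' : R k k = k := R_of_lt (by omega)
  have : k ≤ x₂ - x₃ := by
    by_contra hlt; rw [R_of_lt (show x₂ - x₃ < k + 1 by omega)] at hB; omega
  have := R_sub_of_le (k := k) this le_rfl
  refine ⟨k, by omega, by omega, .of_second (by omega) (by omega)
    (Or.inr (Or.inr (Or.inr ⟨hx₃, hb, .inl ⟨?_, ?_⟩⟩)))⟩
  · rwa [show x₂ - (x₂ - k) = k by omega]
  · rw [show x₂ - k - x₃ = x₂ - x₃ - k by omega]; omega

theorem exists_move_of_not_pCond (hk : 2 ≤ k) (h₁₂ : x₂ ≤ x₁) (h₂₃ : x₃ ≤ x₂) (h₃₄ : x₄ ≤ x₃)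
    (hc : 3 ≤ c) (hx₁ : 1 ≤ x₁) (hC : ¬ PCond k x₁ x₂ x₃ (betaOf x₃ x₄ c)) :
    ∃ t, 1 ≤ t ∧ t ≤ min x₁ k ∧ PCondAfterMove k x₂ x₃ x₄ c (x₁ - t) := by
  unfold PCond at hC
  rcases Nat.even_or_odd (betaOf x₃ x₄ c) with hb | hb <;>
    rcases Nat.lt_or_ge x₃ 2 with hx₃ | hx₃
  · exact exists_move_of_not_kNice hk h₁₂ h₂₃ h₃₄ hc hx₁ (by omega) hb
      fun h => hC (.inl ⟨by omega, hb, h⟩)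
  · obtain ⟨t, ht, htm, h₁, hv⟩ :=
      exists_move_R_sub_eq_zero h₁₂ fun h => hC (.inr (.inr (.inl ⟨hx₃, hb, h⟩)))
    exact ⟨t, ht, htm, .of_first h₁ (.inr (.inr (.inl ⟨hx₃, hb, hv⟩)))⟩
  · obtain ⟨t, ht, htm, h₁, hv⟩ :=
      exists_move_R_sub_eq_zero h₁₂ fun h => hC (.inr (.inl ⟨by omega, hb, h⟩))
    exact ⟨t, ht, htm, .of_first h₁ (.inr (.inl ⟨by omega, hb, hv⟩))⟩
  · exact exists_move_of_not_kGood hk h₁₂ h₂₃ h₃₄ hx₃ hb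
      fun h => hC (.inr (.inr (.inr ⟨hx₃, hb, h⟩)))

end Moves

section Positions

variable {S : List ℕ}

lemma heap_three (a b c : ℕ) (l : List ℕ) : heap (a :: b :: c :: l) 3 = c := rfl

lemma lt_countP_iff_le_getD (hS : S.Pairwise (· ≥ ·)) {w i : ℕ} (hi : i < S.length) :
    i < S.countP (w ≤ ·) ↔ w ≤ S.getD i 0 := by
  induction S generalizing i with
  | nil => simp at hi
  | cons a T ih =>
    rw [List.pairwise_cons] at hS
    by_cases hwa : w ≤ a
    · cases i with
      | zero => simp [hwa]
      | succ j =>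
        rw [List.countP_cons, List.getD_cons_succ, ← ih hS.2 (by simpa using hi)]
        simp [hwa]
    · have hT : T.countP (w ≤ ·) = 0 :=
        List.countP_eq_zero.2 fun y hy => by have := hS.1 y hy; simp; omega
      cases i with
      | zero => simp [hwa, hT]
      | succ j =>
        have hj : j < T.length := by simpa using hi
        have := hS.1 _ (List.getElem_mem hj)
        rw [List.countP_cons, hT, List.getD_cons_succ, List.getD_eq_getElem _ _ hj]
        simp only [hwa, decide_false, Bool.false_eq_true, if_false]
        omega

lemma getD_antitone (hS : S.Pairwise (· ≥ ·)) {i j : ℕ} (hij : i ≤ j) (hj : j < S.length) :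
    S.getD j 0 ≤ S.getD i 0 := by
  rw [List.getD_eq_getElem _ _ hj, List.getD_eq_getElem _ _ (by omega)]
  exact hS.sortedGE.antitone_get (a := ⟨i, by omega⟩) (b := ⟨j, hj⟩) hij

lemma sSup_heap_eq_countP (hS : S.Pairwise (· ≥ ·)) {i : ℕ} (hi₁ : 1 ≤ i) (hi : i ≤ S.length) :
    sSup {j | 1 ≤ j ∧ j ≤ S.length ∧ heap S j = heap S i} = S.countP (heap S i ≤ ·) := by
  set c := S.countP (heap S i ≤ ·)
  have hic : i - 1 < c := (lt_countP_iff_le_getD hS (by omega)).2 le_rfl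
  refine IsGreatest.csSup_eq ⟨⟨by omega, List.countP_le_length, ?_⟩, ?_⟩
  · have := (lt_countP_iff_le_getD hS (i := c - 1) (w := heap S i)
      (by have := List.countP_le_length (p := (heap S i ≤ ·)) (l := S); omega)).1 (by omega)
    have := getD_antitone hS (show i - 1 ≤ c - 1 by omega)
      (by have := List.countP_le_length (p := (heap S i ≤ ·)) (l := S); omega)
    unfold heap at *
    omega
  · rintro j ⟨hj₁, hj, hji⟩
    have := (lt_countP_iff_le_getD hS (i := j - 1) (w := heap S i) (by omega)).2 hji.ge
    omega

lemma beta_eq_countP (hS : S.Pairwise (· ≥ ·)) (hlen : 3 ≤ S.length) :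
    beta S = if heap S 3 = 0 then 0 else S.countP (heap S 3 ≤ ·) - 2 := by
  rw [beta, sSup_heap_eq_countP hS (by omega) hlen]

end Positions

section FourHeaps

variable {k x₁ x₂ x₃ x₄ v : ℕ} {L : List ℕ}

lemma le_of_pairwise_cons4 (hS : (x₁ :: x₂ :: x₃ :: x₄ :: L).Pairwise (· ≥ ·)) :
    x₂ ≤ x₁ ∧ x₃ ≤ x₂ ∧ x₄ ≤ x₃ := by
  simp only [List.pairwise_cons, List.mem_cons] at hS
  exact ⟨hS.1 _ (.inl rfl), hS.2.1 _ (.inl rfl), hS.2.2.1 _ (.inl rfl)⟩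

lemma three_le_countP_cons4 (hS : (x₁ :: x₂ :: x₃ :: x₄ :: L).Pairwise (· ≥ ·)) :
    3 ≤ (x₁ :: x₂ :: x₃ :: x₄ :: L).countP (x₄ ≤ ·) := by
  obtain ⟨h₁₂, h₂₃, h₃₄⟩ := le_of_pairwise_cons4 hS
  simp [h₃₄, show x₄ ≤ x₂ by omega, show x₄ ≤ x₁ by omega]

lemma beta_cons4 (hS : (x₁ :: x₂ :: x₃ :: x₄ :: L).Pairwise (· ≥ ·)) :
    beta (x₁ :: x₂ :: x₃ :: x₄ :: L) =
      betaOf x₃ x₄ ((x₁ :: x₂ :: x₃ :: x₄ :: L).countP (x₄ ≤ ·)) := by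
  obtain ⟨h₁₂, h₂₃, h₃₄⟩ := le_of_pairwise_cons4 hS
  rw [beta_eq_countP hS (by simp), betaOf, heap_three]
  split_ifs with h₃ h₄
  · rfl
  · have hL : L.countP (x₃ ≤ ·) = 0 := List.countP_eq_zero.2 fun y hy => by
      have := (List.pairwise_cons.1 hS.of_cons.of_cons.of_cons).1 y hy
      simp; omega
    simp [hL, h₂₃, h₄, show x₃ ≤ x₁ by omega]
  · obtain rfl : x₄ = x₃ := by omega
    rfl

lemma miserePCond_cons4 (hS : (x₁ :: x₂ :: x₃ :: x₄ :: L).Pairwise (· ≥ ·)) :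
    MiserePCond k (x₁ :: x₂ :: x₃ :: x₄ :: L) ↔
      PCond k x₁ x₂ x₃ (betaOf x₃ x₄ ((x₁ :: x₂ :: x₃ :: x₄ :: L).countP (x₄ ≤ ·))) := by
  rw [← beta_cons4 hS]; rfl

lemma miserePCond_orderedInsert (hS : (x₁ :: x₂ :: x₃ :: x₄ :: L).Pairwise (· ≥ ·))
    (hv : v ≤ x₁) :
    MiserePCond k ((x₂ :: x₃ :: x₄ :: L).orderedInsert (· ≥ ·) v) ↔
      PCondAfterMove k x₂ x₃ x₄ ((x₁ :: x₂ :: x₃ :: x₄ :: L).countP (x₄ ≤ ·)) v := by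
  obtain ⟨h₁₂, h₂₃, h₃₄⟩ := le_of_pairwise_cons4 hS
  have hsorted := hS.of_cons.orderedInsert v
  have hcount := (List.perm_orderedInsert (· ≥ ·) v (x₂ :: x₃ :: x₄ :: L)).countP_eq (x₄ ≤ ·)
  have hx₄ : x₄ ≤ v → (v :: x₂ :: x₃ :: x₄ :: L).countP (x₄ ≤ ·) =
      (x₁ :: x₂ :: x₃ :: x₄ :: L).countP (x₄ ≤ ·) := fun h => by
    simp [List.countP_cons, h, show x₄ ≤ x₁ by omega]
  unfold PCondAfterMove
  split_ifs with h₂ h₃ h₄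
  · rw [List.orderedInsert_cons_of_le (r := (· ≥ ·)) _ h₂] at hsorted hcount ⊢
    rw [miserePCond_cons4 hsorted, hcount, hx₄ (by omega)]
  · rw [List.orderedInsert_of_not_le (r := (· ≥ ·)) _ h₂,
      List.orderedInsert_cons_of_le (r := (· ≥ ·)) _ h₃] at hsorted hcount ⊢
    rw [miserePCond_cons4 hsorted, hcount, hx₄ (by omega)]
  · rw [List.orderedInsert_of_not_le (r := (· ≥ ·)) _ h₂,
      List.orderedInsert_of_not_le (r := (· ≥ ·)) _ h₃,
      List.orderedInsert_cons_of_le (r := (· ≥ ·)) _ h₄] at hsorted hcount ⊢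
    rw [miserePCond_cons4 hsorted, hcount, hx₄ h₄]
  · rw [List.orderedInsert_of_not_le (r := (· ≥ ·)) _ h₂,
      List.orderedInsert_of_not_le (r := (· ≥ ·)) _ h₃,
      List.orderedInsert_of_not_le (r := (· ≥ ·)) _ h₄] at hsorted hcount ⊢
    change PCond k x₂ x₃ x₄ (beta _) ↔ _
    rw [beta_eq_countP hsorted (by simp), heap_three, if_neg (by omega), hcount]
    simp [List.countP_cons, h₄, show x₄ ≤ x₁ by omega]

end FourHeaps

theorem misereBP_iff_of_invariant {k : ℕ} (Q P : List ℕ → Prop)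
    (hQ : ∀ S S', Q S → BFollower k S S' → Q S')
    (hP : ∀ S, Q S → P S → S.sum ≠ 0)
    (hPP : ∀ S S', Q S → P S → BFollower k S S' → ¬ P S')
    (hNP : ∀ S, Q S → ¬ P S → S.sum ≠ 0 → ∃ S', BFollower k S S' ∧ P S')
    {S : List ℕ} (hS : Q S) : MisereBP k S ↔ P S := by
  induction h : S.sum using Nat.strong_induction_on generalizing S with
  | _ n ih =>
  have ih' : ∀ S', BFollower k S S' → (MisereBP k S' ↔ P S') :=
    fun S' hf => ih _ (h ▸ hf.sum_lt) (hQ S S' hS hf) rfl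
  rw [MisereBP]
  constructor
  · rintro ⟨h0, hN⟩
    by_contra hnP
    obtain ⟨S', hf, hP'⟩ := hNP S hS hnP h0
    exact hN S' hf ((ih' S' hf).2 hP')
  · intro hPS
    exact ⟨hP S hS hPS, fun S' hf hM => hPP S S' hS hPS hf ((ih' S' hf).1 hM)⟩

section Game

variable {k : ℕ} {S S' : List ℕ}

lemma exists_eq_cons4 (h : 4 ≤ S.length) : ∃ x₁ x₂ x₃ x₄ L, S = x₁ :: x₂ :: x₃ :: x₄ :: L :=
  match S, h with
  | x₁ :: x₂ :: x₃ :: x₄ :: L, _ => ⟨x₁, x₂, x₃, x₄, L, rfl⟩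

lemma BFollower.length_pairwise (hf : BFollower k S S') (hlen : 4 ≤ S.length)
    (hS : S.Pairwise (· ≥ ·)) : 4 ≤ S'.length ∧ S'.Pairwise (· ≥ ·) := by
  obtain ⟨x₁, x₂, x₃, x₄, L, rfl⟩ := exists_eq_cons4 hlen
  obtain ⟨t, -, -, rfl⟩ := hf
  refine ⟨?_, hS.of_cons.orderedInsert _⟩
  rw [List.orderedInsert_length]
  simp

lemma sum_ne_zero_iff_of_pairwise {x₁ : ℕ} {L : List ℕ} (hS : (x₁ :: L).Pairwise (· ≥ ·)) :
    (x₁ :: L).sum ≠ 0 ↔ 1 ≤ x₁ := by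
  refine ⟨fun h => ?_, fun h => by simp; omega⟩
  by_contra hx₁
  refine h (List.sum_eq_zero fun y hy => ?_)
  rcases List.mem_cons.1 hy with rfl | hy
  · omega
  · have := (List.pairwise_cons.1 hS).1 y hy; omega

lemma MiserePCond.sum_ne_zero (hlen : 4 ≤ S.length) (hS : S.Pairwise (· ≥ ·))
    (hP : MiserePCond k S) : S.sum ≠ 0 := by
  obtain ⟨x₁, x₂, x₃, x₄, L, rfl⟩ := exists_eq_cons4 hlen
  obtain ⟨h₁₂, h₂₃, -⟩ := le_of_pairwise_cons4 hS
  exact (sum_ne_zero_iff_of_pairwise hS).2 (one_le_of_pCond h₁₂ h₂₃ ((miserePCond_cons4 hS).1 hP))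

lemma MiserePCond.not_of_bFollower (hlen : 4 ≤ S.length) (hS : S.Pairwise (· ≥ ·))
    (hP : MiserePCond k S) (hf : BFollower k S S') : ¬ MiserePCond k S' := by
  obtain ⟨x₁, x₂, x₃, x₄, L, rfl⟩ := exists_eq_cons4 hlen
  obtain ⟨h₁₂, h₂₃, h₃₄⟩ := le_of_pairwise_cons4 hS
  obtain ⟨t, ht, htm, rfl⟩ := hf
  change ¬ MiserePCond k ((x₂ :: x₃ :: x₄ :: L).orderedInsert (· ≥ ·) (x₁ - t))
  rw [miserePCond_orderedInsert hS (Nat.sub_le _ _)]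
  exact not_pCondAfterMove_of_pCond h₁₂ h₂₃ h₃₄ (three_le_countP_cons4 hS)
    ((miserePCond_cons4 hS).1 hP) ht (le_min_iff.1 htm).1 (le_min_iff.1 htm).2

lemma exists_bFollower_miserePCond (hk : 2 ≤ k) (hlen : 4 ≤ S.length)
    (hS : S.Pairwise (· ≥ ·)) (hP : ¬ MiserePCond k S) (h0 : S.sum ≠ 0) :
    ∃ S', BFollower k S S' ∧ MiserePCond k S' := by
  obtain ⟨x₁, x₂, x₃, x₄, L, rfl⟩ := exists_eq_cons4 hlen
  obtain ⟨h₁₂, h₂₃, h₃₄⟩ := le_of_pairwise_cons4 hS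
  obtain ⟨t, ht, htm, hF⟩ := exists_move_of_not_pCond hk h₁₂ h₂₃ h₃₄
    (three_le_countP_cons4 hS) ((sum_ne_zero_iff_of_pairwise hS).1 h0)
    (mt (miserePCond_cons4 hS).2 hP)
  exact ⟨_, ⟨t, ht, htm, rfl⟩, (miserePCond_orderedInsert hS (Nat.sub_le _ _)).2 hF⟩

end Game

theorem stmt3 (k : ℕ) (hk : 2 ≤ k) (S : List ℕ) (hn : 4 ≤ S.length) (hsorted : S.Pairwise (· ≥ ·)) :
    MisereBP k S ↔
      ((heap S 3 ≤ 1 ∧ Even (beta S) ∧ KNice k (heap S 1) (heap S 2)) ∨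
       (heap S 3 ≤ 1 ∧ Odd (beta S) ∧ R k (heap S 1 - heap S 2) = 0) ∨
       (2 ≤ heap S 3 ∧ Even (beta S) ∧ R k (heap S 1 - heap S 2) = 0) ∨
       (2 ≤ heap S 3 ∧ Odd (beta S) ∧ KGood k (heap S 1) (heap S 2) (heap S 3))) :=
  misereBP_iff_of_invariant (fun S => 4 ≤ S.length ∧ S.Pairwise (· ≥ ·)) (MiserePCond k)
    (fun _ _ hS hf => hf.length_pairwise hS.1 hS.2)
    (fun _ hS => MiserePCond.sum_ne_zero hS.1 hS.2)
    (fun _ _ hS hP hf => hP.not_of_bFollower hS.1 hS.2 hf)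
    (fun _ hS => exists_bFollower_miserePCond hk hS.1 hS.2)
    ⟨hn, hsorted⟩
end

section
/- If a position S = (x_1, ..., x_n) satisfies x_1 ≥ 2, then S is a standard position of Greedy Nim: S is a P-position in misère Greedy Nim if and only if S is a P-position in normal play Greedy Nim. -/
/-!
In normal play the P-positions of greedy Nim are those whose largest heap is empty or occurs an
even number of times; in misère play they are those with `x₁ ≥ 2` and an even number of largest
heaps, together with those with `x₁ ≤ 1` and an odd number of heaps of size one. Each set is a
kernel of the move relation: no move stays inside it, and from every position outside it (other
than the terminal one, in misère play) some move leads into it. The two descriptions agree as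
soon as `x₁ ≥ 2`.
-/

namespace List

theorem headI_orderedInsert (v : ℕ) (l : List ℕ) :
    (l.orderedInsert (· ≥ ·) v).headI = max v l.headI := by
  cases l with
  | nil => simp
  | cons b l => by_cases h : v ≥ b <;> simp [orderedInsert, h]; omega

theorem count_orderedInsert (v x : ℕ) (l : List ℕ) :
    (l.orderedInsert (· ≥ ·) v).count x = (v :: l).count x :=
  (perm_orderedInsert _ v l).count_eq x

theorem le_headI_of_mem {S : List ℕ} (hS : S.Pairwise (· ≥ ·)) {x : ℕ} (hx : x ∈ S) :
    x ≤ S.headI := by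
  cases S with
  | nil => simp at hx
  | cons a l =>
    rcases mem_cons.mp hx with rfl | hx
    · exact le_rfl
    · exact rel_of_pairwise_cons hS hx

theorem headI_tail_le {a : ℕ} {l : List ℕ} (hS : (a :: l).Pairwise (· ≥ ·)) : l.headI ≤ a := by
  cases l with
  | nil => exact Nat.zero_le a
  | cons b l => exact rel_of_pairwise_cons hS mem_cons_self

theorem sum_eq_zero_of_headI_eq_zero {S : List ℕ} (hS : S.Pairwise (· ≥ ·)) (h : S.headI = 0) :
    S.sum = 0 :=
  sum_eq_zero fun _ hx => Nat.eq_zero_of_le_zero (h ▸ le_headI_of_mem hS hx)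

end List

open List

theorem gFollower_cons_of_lt {a v : ℕ} (l : List ℕ) (hv : v < a) :
    GFollower (a :: l) (l.orderedInsert (· ≥ ·) v) :=
  ⟨a - v, by omega, by simp only [headI]; omega, by simp only [headI, tail]; congr; omega⟩

namespace GFollower

variable {S S' : List ℕ}

theorem exists_cons (h : GFollower S S') :
    ∃ a l v, S = a :: l ∧ v < a ∧ S' = l.orderedInsert (· ≥ ·) v := by
  obtain ⟨t, ht1, ht2, rfl⟩ := h
  cases S with
  | nil => exact absurd (ht1.trans ht2) (by simp)
  | cons a l => exact ⟨a, l, a - t, rfl, by simp only [headI_cons] at ht2; omega, rfl⟩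

theorem headI_pos (h : GFollower S S') : 0 < S.headI := by
  obtain ⟨t, ht1, ht2, -⟩ := h
  exact Nat.lt_of_lt_of_le ht1 ht2

theorem pairwise (h : GFollower S S') (hS : S.Pairwise (· ≥ ·)) : S'.Pairwise (· ≥ ·) := by
  obtain ⟨a, l, v, rfl, -, rfl⟩ := h.exists_cons
  exact hS.of_cons.orderedInsert v l

/-- With an even number of largest heaps, the largest heap taken from has a partner of the same
size, so every move keeps the maximum and leaves an odd number of largest heaps. -/
theorem headI_eq_and_odd_count (h : GFollower S S') (hS : S.Pairwise (· ≥ ·))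
    (heven : Even (S.count S.headI)) : S'.headI = S.headI ∧ Odd (S'.count S.headI) := by
  obtain ⟨a, l, v, rfl, hv, rfl⟩ := h.exists_cons
  simp only [headI_cons, count_cons_self, Nat.even_add_one, Nat.not_even_iff_odd] at heven ⊢
  have hl : l.headI = a :=
    le_antisymm (headI_tail_le hS) (le_headI_of_mem hS.of_cons (count_pos_iff.mp heven.pos))
  rw [headI_orderedInsert, hl, max_eq_right hv.le, count_orderedInsert, count_cons_of_ne hv.ne]
  exact ⟨rfl, heven⟩

end GFollower

/-- If the top heap `a` has an even number of partners, one can move so that the second largest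
value `l.headI` becomes the maximum and occurs an even number of times: take the top heap to `0`
or to `l.headI`, according to the parity of `l.count l.headI`. -/
theorem exists_gFollower_even_count {a : ℕ} {l : List ℕ} (hS : (a :: l).Pairwise (· ≥ ·))
    (hb : l.headI ≠ 0) (heven : Even (l.count a)) :
    ∃ S', GFollower (a :: l) S' ∧ S'.headI = l.headI ∧ Even (S'.count l.headI) := by
  have hba := headI_tail_le hS
  rcases Nat.even_or_odd (l.count l.headI) with hb' | hb'
  · refine ⟨_, gFollower_cons_of_lt l (by omega : 0 < a), ?_, ?_⟩
    · rw [headI_orderedInsert, max_eq_right (Nat.zero_le _)]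
    · rwa [count_orderedInsert, count_cons_of_ne (Ne.symm hb)]
  · have hlt : l.headI < a := lt_of_le_of_ne hba fun h => by
      rw [h, Nat.odd_iff] at hb'
      rw [Nat.even_iff] at heven
      omega
    refine ⟨_, gFollower_cons_of_lt l hlt, ?_, ?_⟩
    · rw [headI_orderedInsert, max_self]
    · rw [count_orderedInsert, count_cons_self]
      exact hb'.add_one

section Kernel

variable {D Q : List ℕ → Prop}

theorem normalGP_iff_of_kernel (hD : ∀ S S', D S → GFollower S S' → D S')
    (hP : ∀ S S', D S → Q S → GFollower S S' → ¬ Q S')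
    (hN : ∀ S, D S → ¬ Q S → ∃ S', GFollower S S' ∧ Q S') {S : List ℕ} (hS : D S) :
    NormalGP S ↔ Q S := by
  rw [NormalGP]
  constructor
  · intro hS'
    by_contra hQ
    obtain ⟨S', hF, hQ'⟩ := hN S hS hQ
    exact hS' S' hF ((normalGP_iff_of_kernel hD hP hN (hD S S' hS hF)).mpr hQ')
  · intro hQ S' hF hP'
    exact hP S S' hS hQ hF ((normalGP_iff_of_kernel hD hP hN (hD S S' hS hF)).mp hP')
termination_by S.sum
decreasing_by all_goals exact hF.sum_lt

theorem misereGP_iff_of_kernel (hD : ∀ S S', D S → GFollower S S' → D S')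
    (hP : ∀ S, D S → Q S → S.sum ≠ 0 ∧ ∀ S', GFollower S S' → ¬ Q S')
    (hN : ∀ S, D S → ¬ Q S → S.sum = 0 ∨ ∃ S', GFollower S S' ∧ Q S') {S : List ℕ} (hS : D S) :
    MisereGP S ↔ Q S := by
  rw [MisereGP]
  constructor
  · rintro ⟨hsum, hS'⟩
    by_contra hQ
    obtain ⟨S', hF, hQ'⟩ := (hN S hS hQ).resolve_left hsum
    exact hS' S' hF ((misereGP_iff_of_kernel hD hP hN (hD S S' hS hF)).mpr hQ')
  · intro hQ
    refine ⟨(hP S hS hQ).1, fun S' hF hP' => (hP S hS hQ).2 S' hF ?_⟩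
    exact (misereGP_iff_of_kernel hD hP hN (hD S S' hS hF)).mp hP'
termination_by S.sum
decreasing_by all_goals exact hF.sum_lt

end Kernel

def GreedyNormalPCond (S : List ℕ) : Prop :=
  S.headI = 0 ∨ Even (S.count S.headI)

def GreedyMiserePCond (S : List ℕ) : Prop :=
  (2 ≤ S.headI ∧ Even (S.count S.headI)) ∨ (S.headI ≤ 1 ∧ Odd (S.count 1))

section Characterization

variable {S S' : List ℕ}

theorem GFollower.not_greedyNormalPCond (h : GFollower S S') (hS : S.Pairwise (· ≥ ·))
    (hQ : GreedyNormalPCond S) : ¬ GreedyNormalPCond S' := by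
  rcases hQ with h0 | heven
  · exact absurd h0 h.headI_pos.ne'
  obtain ⟨hhead, hodd⟩ := h.headI_eq_and_odd_count hS heven
  rw [GreedyNormalPCond, hhead]
  rintro (h0 | heven')
  · exact h.headI_pos.ne' h0
  · exact Nat.not_even_iff_odd.mpr hodd heven'

theorem exists_gFollower_greedyNormalPCond (hS : S.Pairwise (· ≥ ·))
    (hQ : ¬ GreedyNormalPCond S) : ∃ S', GFollower S S' ∧ GreedyNormalPCond S' := by
  cases S with
  | nil => exact absurd (Or.inl rfl) hQ
  | cons a l =>
    simp only [GreedyNormalPCond, headI_cons, count_cons_self, Nat.even_add_one, not_or,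
      not_not] at hQ
    obtain ⟨ha, heven⟩ := hQ
    by_cases hb : l.headI = 0
    · refine ⟨_, gFollower_cons_of_lt l (Nat.pos_of_ne_zero ha), Or.inl ?_⟩
      rw [headI_orderedInsert, hb, max_self]
    · obtain ⟨S', hF, hhead, heven'⟩ := exists_gFollower_even_count hS hb heven
      refine ⟨S', hF, Or.inr ?_⟩
      rwa [hhead]

theorem GreedyMiserePCond.sum_ne_zero (hQ : GreedyMiserePCond S) (hS : S.Pairwise (· ≥ ·)) :
    S.sum ≠ 0 := by
  have hpos : 0 < S.headI := by
    rcases hQ with ⟨h2, -⟩ | ⟨-, hodd⟩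
    · omega
    · exact le_headI_of_mem hS (count_pos_iff.mp hodd.pos)
  exact (hpos.trans_le (headI_le_sum S)).ne'

theorem GFollower.not_greedyMiserePCond (h : GFollower S S') (hS : S.Pairwise (· ≥ ·))
    (hQ : GreedyMiserePCond S) : ¬ GreedyMiserePCond S' := by
  rcases hQ with ⟨h2, heven⟩ | ⟨h1, hodd⟩
  · obtain ⟨hhead, hodd⟩ := h.headI_eq_and_odd_count hS heven
    rw [GreedyMiserePCond, hhead]
    rintro (⟨-, heven'⟩ | ⟨h1, -⟩)
    · exact Nat.not_even_iff_odd.mpr hodd heven'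
    · omega
  · obtain ⟨a, l, v, rfl, hv, rfl⟩ := h.exists_cons
    obtain rfl : a = 1 := le_antisymm h1 (le_headI_of_mem hS (count_pos_iff.mp hodd.pos))
    obtain rfl : v = 0 := by omega
    have hb := headI_tail_le hS
    rw [count_cons_self, Nat.odd_add_one, Nat.not_odd_iff_even] at hodd
    simp only [GreedyMiserePCond, headI_orderedInsert, count_orderedInsert,
      count_cons_of_ne zero_ne_one]
    rintro (⟨h2, -⟩ | ⟨-, hodd'⟩)
    · omega
    · exact Nat.not_odd_iff_even.mpr hodd hodd'

theorem exists_gFollower_greedyMiserePCond (hS : S.Pairwise (· ≥ ·))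
    (hQ : ¬ GreedyMiserePCond S) : S.sum = 0 ∨ ∃ S', GFollower S S' ∧ GreedyMiserePCond S' := by
  cases S with
  | nil => exact Or.inl rfl
  | cons a l =>
    rcases Nat.eq_zero_or_pos a with rfl | ha
    · exact Or.inl (sum_eq_zero_of_headI_eq_zero hS rfl)
    right
    have hba := headI_tail_le hS
    simp only [GreedyMiserePCond, headI_cons, not_or, not_and] at hQ
    by_cases hb : 2 ≤ l.headI
    · have heven : Even (l.count a) := by
        simpa only [count_cons_self, Nat.even_add_one, not_not] using hQ.1 (hb.trans hba)
      obtain ⟨S', hF, hhead, heven'⟩ := exists_gFollower_even_count hS (by omega) heven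
      exact ⟨S', hF, Or.inl ⟨hhead ▸ hb, hhead ▸ heven'⟩⟩
    · rcases Nat.even_or_odd (l.count 1) with h1 | h1
      · have ha1 : 1 < a := by
          by_contra ha1
          obtain rfl : a = 1 := by omega
          exact hQ.2 le_rfl (by rw [count_cons_self]; exact h1.add_one)
        refine ⟨_, gFollower_cons_of_lt l ha1, Or.inr ⟨?_, ?_⟩⟩
        · rw [headI_orderedInsert]
          omega
        · rw [count_orderedInsert, count_cons_self]
          exact h1.add_one
      · refine ⟨_, gFollower_cons_of_lt l ha, Or.inr ⟨?_, ?_⟩⟩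
        · rw [headI_orderedInsert]
          omega
        · rwa [count_orderedInsert, count_cons_of_ne zero_ne_one]

theorem normalGP_iff_greedyNormalPCond (hS : S.Pairwise (· ≥ ·)) :
    NormalGP S ↔ GreedyNormalPCond S :=
  normalGP_iff_of_kernel (fun _ _ hS h => h.pairwise hS)
    (fun _ _ hS hQ h => h.not_greedyNormalPCond hS hQ)
    (fun _ hS hQ => exists_gFollower_greedyNormalPCond hS hQ) hS

theorem misereGP_iff_greedyMiserePCond (hS : S.Pairwise (· ≥ ·)) :
    MisereGP S ↔ GreedyMiserePCond S :=
  misereGP_iff_of_kernel (fun _ _ hS h => h.pairwise hS)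
    (fun _ hS hQ => ⟨hQ.sum_ne_zero hS, fun _ h => h.not_greedyMiserePCond hS hQ⟩)
    (fun _ hS hQ => exists_gFollower_greedyMiserePCond hS hQ) hS

end Characterization

theorem heap_one_eq_headI (S : List ℕ) : heap S 1 = S.headI := by
  cases S <;> rfl

theorem stmt7_general (S : List ℕ) (hsorted : S.Pairwise (· ≥ ·)) (h1 : 2 ≤ heap S 1) :
    MisereGP S ↔ NormalGP S := by
  rw [misereGP_iff_greedyMiserePCond hsorted, normalGP_iff_greedyNormalPCond hsorted,
    GreedyMiserePCond, GreedyNormalPCond]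
  rw [heap_one_eq_headI] at h1
  have h0 : S.headI ≠ 0 := by omega
  have hle : ¬ S.headI ≤ 1 := by omega
  simp only [h1, h0, hle, true_and, false_and, or_false, false_or]

theorem stmt7 (S : List ℕ) (hn : 4 ≤ S.length) (hsorted : S.Pairwise (· ≥ ·)) (h1 : 2 ≤ heap S 1) :
    MisereGP S ↔ NormalGP S :=
  stmt7_general S hsorted h1
end
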